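/- arXiv:2209.00565 — 4 statements merged into one kernel-verified Lean document; each statement's English description precedes it below -/
import Mathlib

section
/- Let M be a finite set of machines where each machine i has speed s_i > 0, let J be a finite set of jobs where each job j has size p_j > 0, and let T > 0. Suppose there are subsets M' ⊆ M and S ⊆ J such that (i) for every job j ∈ S and every machine i ∈ M \ M' one has p_j > T·s_i, and (ii) ∑_{j∈S} p_j > T·∑_{i∈M'} s_i. Then for every assignment σ : J → M there exists a machine i ∈ M whose load ∑_{j : σ(j)=i} p_j / s_i is strictly greater than T; in particular, no schedule of J on M has makespan at most T. -/
/-- If a set `S` of jobs can only be placed on machines in `M'`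
(every job in `S` is too big for machines in `M \ M'` at load bound `T`), and the
total size of `S` exceeds `T` times the total speed of `M'`, then every assignment
of all jobs to machines in `M` has some machine with load strictly greater than `T`. -/
theorem no_schedule_with_makespan_le
    {ι κ : Type*} [DecidableEq ι]
    (M : Finset ι) (J : Finset κ) (s : ι → ℝ) (p : κ → ℝ) (T : ℝ)
    (hs : ∀ i ∈ M, 0 < s i) (hp : ∀ j ∈ J, 0 < p j) (hT : 0 < T)
    (M' : Finset ι) (S : Finset κ) (hM' : M' ⊆ M) (hS : S ⊆ J)
    (hbig : ∀ j ∈ S, ∀ i ∈ M \ M', T * s i < p j)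
    (hsum : T * ∑ i ∈ M', s i < ∑ j ∈ S, p j) :
    ∀ σ : κ → ι, (∀ j ∈ J, σ j ∈ M) →
      ∃ i ∈ M, T < ∑ j ∈ J.filter (fun j => σ j = i), p j / s i := by
  intro σ hσ
  by_contra hcon
  push_neg at hcon
  -- every machine's load is ≤ T, hence total work on machine i is ≤ T * s i
  have hload : ∀ i ∈ M, ∑ j ∈ J.filter (fun j => σ j = i), p j ≤ T * s i := by
    intro i hi
    have h1 := hcon i hi
    have hsi := hs i hi
    have : (∑ j ∈ J.filter (fun j => σ j = i), p j) / s i ≤ T := by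
      rw [Finset.sum_div]; exact h1
    calc ∑ j ∈ J.filter (fun j => σ j = i), p j
        = ((∑ j ∈ J.filter (fun j => σ j = i), p j) / s i) * s i := by
          field_simp
      _ ≤ T * s i := mul_le_mul_of_nonneg_right this hsi.le
  -- every job in S is assigned to a machine in M'
  have hSM' : ∀ j ∈ S, σ j ∈ M' := by
    intro j hj
    by_contra hjnot
    have hiM : σ j ∈ M := hσ j (hS hj)
    have hidiff : σ j ∈ M \ M' := Finset.mem_sdiff.mpr ⟨hiM, hjnot⟩
    have hbj := hbig j hj (σ j) hidiff
    have hjmem : j ∈ J.filter (fun k => σ k = σ j) :=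
      Finset.mem_filter.mpr ⟨hS hj, rfl⟩
    have hle : p j ≤ ∑ k ∈ J.filter (fun k => σ k = σ j), p k :=
      Finset.single_le_sum (fun k hk => (hp k (Finset.mem_filter.mp hk).1).le) hjmem
    have := hload (σ j) hiM
    linarith
  -- sum over S fiberwise
  have hfib : ∑ j ∈ S, p j = ∑ i ∈ M', ∑ j ∈ S.filter (fun j => σ j = i), p j :=
    (Finset.sum_fiberwise_of_maps_to hSM' p).symm
  have hbound : ∑ j ∈ S, p j ≤ T * ∑ i ∈ M', s i := by
    rw [hfib, Finset.mul_sum]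
    apply Finset.sum_le_sum
    intro i hi
    calc ∑ j ∈ S.filter (fun j => σ j = i), p j
        ≤ ∑ j ∈ J.filter (fun j => σ j = i), p j := by
          apply Finset.sum_le_sum_of_subset_of_nonneg
          · exact Finset.filter_subset_filter _ hS
          · intro j hj _; exact (hp j (Finset.mem_filter.mp hj).1).le
      _ ≤ T * s i := hload i (hM' hi)
  linarith
end

section
/- Let γ ∈ (0,1), set η = γ⁻¹ (so η > 1) and ξ = γ⁻¹ + 1/3, and let T > 0. Let ℓ̄, ℓ̌, ℓ̂ be nonnegative reals satisfying: ℓ̂ ≤ ℓ̄ − (γ/2)·ℓ̌, ℓ̄ ≤ (1+η)·ξ⁻¹·T, and ℓ̌ ≤ η·T. Then ℓ̌ + ℓ̂ < (1+η)·T. -/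
/-!
The single new job was charged at least half its migration potential, so
`ℓ̌ + ℓ̂ ≤ ℓ̄ + (1 - γ/2) ℓ̌ ≤ ((1 + η) ξ⁻¹ + (1 - γ/2) η) T`. With `η = γ⁻¹` and
`ξ = γ⁻¹ + 1/3` the factor is `3(1 + γ)/(3 + γ) + γ⁻¹ - 1/2`, and
`3(1 + γ)/(3 + γ) < 3/2` is exactly `γ < 1`.
-/

lemma add_le_of_le_sub_half_mul {γ ℓbar ℓnew ℓold A B : ℝ} (hγ : γ ≤ 2)
    (hold : ℓold ≤ ℓbar - (γ / 2) * ℓnew) (hbar : ℓbar ≤ A) (hnew : ℓnew ≤ B) :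
    ℓnew + ℓold ≤ A + (1 - γ / 2) * B := by
  have := mul_le_mul_of_nonneg_left hnew (by linarith : 0 ≤ 1 - γ / 2)
  linarith

lemma one_add_inv_mul_inv_add_third {γ : ℝ} (hγ : 0 < γ) :
    (1 + γ⁻¹) * (γ⁻¹ + 1 / 3)⁻¹ = 3 * (1 + γ) / (3 + γ) := by
  field_simp
  ring

lemma three_mul_one_add_div_three_add_lt {γ : ℝ} (hγ : 0 < γ) (hγ1 : γ < 1) :
    3 * (1 + γ) / (3 + γ) < 3 / 2 := by
  rw [div_lt_div_iff₀ (by positivity) two_pos]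
  linarith

theorem second_amortized_one_job_load_bound_general
    (γ T ℓbar ℓnew ℓold : ℝ)
    (hγ : γ ∈ Set.Ioo (0 : ℝ) 1)
    (η ξ : ℝ) (hη : η = γ⁻¹) (hξ : ξ = γ⁻¹ + 1/3)
    (hT : 0 < T)
    (h1 : ℓold ≤ ℓbar - (γ / 2) * ℓnew)
    (h2 : ℓbar ≤ (1 + η) * ξ⁻¹ * T)
    (h3 : ℓnew ≤ η * T) :
    ℓnew + ℓold < (1 + η) * T := by
  obtain ⟨hγ0, hγ1⟩ := hγ
  subst hη hξ
  have hfactor := three_mul_one_add_div_three_add_lt hγ0 hγ1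
  rw [← one_add_inv_mul_inv_add_third hγ0] at hfactor
  have hhalf : (1 - γ / 2) * γ⁻¹ = γ⁻¹ - 1 / 2 := by field_simp
  calc ℓnew + ℓold ≤ (1 + γ⁻¹) * (γ⁻¹ + 1 / 3)⁻¹ * T + (1 - γ / 2) * (γ⁻¹ * T) :=
        add_le_of_le_sub_half_mul (by linarith) h1 h2 h3
    _ = ((1 + γ⁻¹) * (γ⁻¹ + 1 / 3)⁻¹ + γ⁻¹ - 1 / 2) * T := by rw [← mul_assoc, hhalf]; ring
    _ < (3 / 2 + γ⁻¹ - 1 / 2) * T := by gcongr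
    _ = (1 + γ⁻¹) * T := by ring

/-- Arithmetic core of the first case (exactly one new job) of
Lemma 8 (second amortized approach, `η = γ⁻¹`, `ξ = γ⁻¹ + 1/3`). -/
theorem second_amortized_one_job_load_bound
    (γ T ℓbar ℓnew ℓold : ℝ)
    (hγ : γ ∈ Set.Ioo (0 : ℝ) 1)
    (η ξ : ℝ) (hη : η = γ⁻¹) (hξ : ξ = γ⁻¹ + 1/3)
    (hT : 0 < T)
    (hbar : 0 ≤ ℓbar) (hnew : 0 ≤ ℓnew) (hold : 0 ≤ ℓold)
    (h1 : ℓold ≤ ℓbar - (γ / 2) * ℓnew)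
    (h2 : ℓbar ≤ (1 + η) * ξ⁻¹ * T)
    (h3 : ℓnew ≤ η * T) :
    ℓnew + ℓold < (1 + η) * T :=
  second_amortized_one_job_load_bound_general γ T ℓbar ℓnew ℓold hγ η ξ hη hξ hT h1 h2 h3
end

section
/- Let γ ∈ (0,1), set η = γ⁻¹ and ξ = η + 1/3, and let T ≥ 0. Let ℓ̄, ℓ̌, ℓ̂, π be nonnegative reals satisfying: ℓ̂ ≤ ℓ̄ − (γ·ℓ̌ − π), π ≤ ℓ̂, π ≤ (1+η)·ξ⁻¹·T/3, and ℓ̄ ≤ (1+η)·ξ⁻¹·T. Then ℓ̌ + ℓ̂ ≤ (1+η)·T. -/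
/-- Arithmetic core of the second case (more than one new job) of
Lemma 8 (second amortized approach, `η = γ⁻¹`, `ξ = η + 1/3`). -/
theorem second_amortized_many_jobs_load_bound
    (γ T ℓbar ℓnew ℓold π : ℝ)
    (hγ : γ ∈ Set.Ioo (0 : ℝ) 1)
    (η ξ : ℝ) (hη : η = γ⁻¹) (hξ : ξ = η + 1/3)
    (hT : 0 ≤ T)
    (hbar : 0 ≤ ℓbar) (hnew : 0 ≤ ℓnew) (hold : 0 ≤ ℓold) (hπ : 0 ≤ π)
    (h1 : ℓold ≤ ℓbar - (γ * ℓnew - π))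
    (h2 : π ≤ ℓold)
    (h3 : π ≤ (1 + η) * ξ⁻¹ * T / 3)
    (h4 : ℓbar ≤ (1 + η) * ξ⁻¹ * T) :
    ℓnew + ℓold ≤ (1 + η) * T := by
  obtain ⟨hγ0, hγ1⟩ := hγ
  have hη1 : 1 < η := by
    rw [hη]; exact (one_lt_inv_iff₀).2 ⟨hγ0, hγ1⟩
  have hξ0 : 0 < ξ := by rw [hξ]; linarith
  have hγη : γ * η = 1 := by
    rw [hη]; field_simp
  set A := (1 + η) * ξ⁻¹ * T with hA
  have hA0 : 0 ≤ A := by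
    apply mul_nonneg (mul_nonneg (by linarith) (by positivity)) hT
  have hAξ : ξ * A = (1 + η) * T := by
    rw [hA]; field_simp
  -- ℓnew ≤ η * (ℓbar - ℓold + π)
  have key : ℓnew ≤ η * (ℓbar - ℓold + π) := by
    have h1' : γ * ℓnew ≤ ℓbar - ℓold + π := by linarith
    have := mul_le_mul_of_nonneg_left h1' (by linarith : (0:ℝ) ≤ η)
    calc ℓnew = η * (γ * ℓnew) := by rw [← mul_assoc, mul_comm η γ, hγη, one_mul]
      _ ≤ η * (ℓbar - ℓold + π) := this
  -- ℓnew + ℓold ≤ η ℓbar + π ≤ η A + A/3 = ξ A = (1+η) T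
  nlinarith [mul_le_mul_of_nonneg_left h4 (by linarith : (0:ℝ) ≤ η),
    mul_le_mul_of_nonneg_left h2 (by linarith : (0:ℝ) ≤ η - 1)]
end

section
/- Let B > 0 and let S be a finite multiset of real numbers each lying in the interval (0, B]. Then there exists a submultiset R of S such that the sum of R is at most B, and either R = S or the sum of R is strictly greater than B/2. -/
/-- Greedy migration claim: from a finite multiset `S` of reals all
in `(0, B]` one can pick a submultiset `R` with sum at most `B` such that either
`R = S` or the sum of `R` exceeds `B/2`. -/
theorem greedy_migration_exists
    (B : ℝ) (hB : 0 < B) (S : Multiset ℝ)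
    (hS : ∀ x ∈ S, 0 < x ∧ x ≤ B) :
    ∃ R : Multiset ℝ, R ≤ S ∧ R.sum ≤ B ∧ (R = S ∨ B / 2 < R.sum) := by
  induction S using Multiset.induction with
  | empty =>
    exact ⟨0, le_refl _, by simpa using hB.le, Or.inl rfl⟩
  | cons x s ih =>
    have hx := hS x (Multiset.mem_cons_self x s)
    obtain ⟨R, hRs, hRB, hR⟩ := ih (fun y hy => hS y (Multiset.mem_cons_of_mem hy))
    rcases hR with rfl | hR2
    · -- R = s
      by_cases h : x + R.sum ≤ B
      · exact ⟨x ::ₘ R, le_refl _, by simpa using h, Or.inl rfl⟩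
      · push_neg at h
        by_cases h2 : B / 2 < R.sum
        · exact ⟨R, Multiset.le_cons_self _ _, hRB, Or.inr h2⟩
        · push_neg at h2
          refine ⟨{x}, ?_, by simpa using hx.2, Or.inr ?_⟩
          · simpa using Multiset.cons_le_cons x (Multiset.zero_le R)
          · simp only [Multiset.sum_singleton]
            linarith
    · exact ⟨R, le_trans hRs (Multiset.le_cons_self _ _), hRB, Or.inr hR2⟩
end
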